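/- arXiv:1404.0093 — 4 statements merged into one kernel-verified Lean document; each statement's English description precedes it below -/
import Mathlib

section
/- Let G be a group and A ⊆ G a nonempty finite symmetric subset containing the identity. If ∑_{x∈G} r_A(x)² = |A|³, where r_A(x) = #{(a₁,a₂) ∈ A × A : a₁a₂ = x}, then A is a subgroup of G. -/
/-!
Write `r(x)` for the number of representations `x = a₁ * a₂` with `a₁, a₂ ∈ A`. Since `a₁`
determines `a₂`, we have `r(x) ≤ |A|`, while `∑ r(x) = |A|²`; hence `∑ r(x)² ≤ |A| ∑ r(x) = |A|³`,
and equality forces `r(x) = |A|` for every `x ∈ A * A`. Then every `a₁ ∈ A`, in particular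
`a₁ = 1`, occurs in a representation of `x`, so `A * A ⊆ A`.
-/

open Finset
open scoped Pointwise

namespace Finset

lemma eq_zero_or_eq_of_sum_sq_eq_mul_sum {ι : Type*} {s : Finset ι} {f : ι → ℕ} {M : ℕ}
    (hf : ∀ i ∈ s, f i ≤ M) (h : ∑ i ∈ s, f i ^ 2 = M * ∑ i ∈ s, f i) :
    ∀ i ∈ s, f i = 0 ∨ f i = M := by
  have hle : ∀ i ∈ s, f i ^ 2 ≤ M * f i := fun i hi => by
    rw [sq]; exact Nat.mul_le_mul_right _ (hf i hi)
  rw [mul_sum, sum_eq_sum_iff_of_le hle] at h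
  intro i hi
  have := h i hi
  rw [sq, mul_comm M] at this
  simpa [or_comm] using this

variable {α : Type*} [DecidableEq α]

section Mul
variable [Mul α]

lemma injOn_fst_filter_mul_eq [IsLeftCancelMul α] (s t : Finset α) (x : α) :
    Set.InjOn Prod.fst (↑({p ∈ s ×ˢ t | p.1 * p.2 = x} : Finset (α × α)) : Set (α × α)) := by
  rintro ⟨a, b⟩ hp ⟨a', b'⟩ hq (rfl : a = a')
  simp only [coe_filter, Set.mem_ofPred_eq] at hp hq
  rw [mul_left_cancel (hp.2.trans hq.2.symm)]

lemma card_filter_mul_eq_le_card_left [IsLeftCancelMul α] (s t : Finset α) (x : α) :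
    #{p ∈ s ×ˢ t | p.1 * p.2 = x} ≤ #s :=
  card_le_card_of_injOn Prod.fst (fun _ hp => (mem_product.1 (mem_filter.1 hp).1).1)
    (injOn_fst_filter_mul_eq s t x)

lemma sum_card_filter_mul_eq (s t : Finset α) :
    ∑ x ∈ s * t, #{p ∈ s ×ˢ t | p.1 * p.2 = x} = #s * #t := by
  rw [← card_product, card_eq_sum_card_fiberwise (f := fun p : α × α => p.1 * p.2)]
  exact fun p hp => mul_mem_mul (mem_product.1 hp).1 (mem_product.1 hp).2

lemma finsum_card_filter_mul_eq_sq (s t : Finset α) :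
    ∑ᶠ x, #{p ∈ s ×ˢ t | p.1 * p.2 = x} ^ 2 = ∑ x ∈ s * t, #{p ∈ s ×ˢ t | p.1 * p.2 = x} ^ 2 := by
  refine finsum_eq_finsetSum_of_support_subset _ fun x hx => ?_
  obtain ⟨⟨a, b⟩, hp⟩ :=
    card_ne_zero.1 <| (pow_ne_zero_iff two_ne_zero).1 <| Function.mem_support.1 hx
  obtain ⟨⟨ha, hb⟩, rfl⟩ := by simpa only [mem_filter, mem_product] using hp
  exact mul_mem_mul ha hb

end Mul

lemma mem_of_card_filter_mul_eq_eq_card [MulOneClass α] [IsLeftCancelMul α] {s t : Finset α}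
    {x : α} (h1 : 1 ∈ s) (h : #{p ∈ s ×ˢ t | p.1 * p.2 = x} = #s) : x ∈ t := by
  have himage : {p ∈ s ×ˢ t | p.1 * p.2 = x}.image Prod.fst = s := by
    refine eq_of_subset_of_card_le (fun a ha => ?_) ?_
    · obtain ⟨p, hp, rfl⟩ := mem_image.1 ha
      exact (mem_product.1 (mem_filter.1 hp).1).1
    · rw [card_image_of_injOn (injOn_fst_filter_mul_eq s t x), h]
  obtain ⟨⟨a, b⟩, hp, rfl : a = 1⟩ := mem_image.1 (himage ▸ h1)
  simp only [mem_filter, mem_product, one_mul] at hp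
  exact hp.2 ▸ hp.1.2

end Finset

theorem stmt_1_general {G : Type*} [Group G] [DecidableEq G] (A : Finset G)
    (h1 : (1 : G) ∈ A) (hsymm : ∀ a ∈ A, a⁻¹ ∈ A)
    (henergy : ∑ᶠ x : G,
      (((A ×ˢ A).filter fun p => p.1 * p.2 = x).card) ^ 2 = A.card ^ 3) :
    ∃ H : Subgroup G, (A : Set G) = (H : Set G) := by
  have hsq : ∑ x ∈ A * A, #{p ∈ A ×ˢ A | p.1 * p.2 = x} ^ 2
      = #A * ∑ x ∈ A * A, #{p ∈ A ×ˢ A | p.1 * p.2 = x} := by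
    rw [← finsum_card_filter_mul_eq_sq, henergy, sum_card_filter_mul_eq]
    ring
  have hmul : ∀ a ∈ A, ∀ b ∈ A, a * b ∈ A := by
    intro a ha b hb
    have hpos : #{p ∈ A ×ˢ A | p.1 * p.2 = a * b} ≠ 0 :=
      card_ne_zero.2 ⟨(a, b), by simp [ha, hb]⟩
    exact mem_of_card_filter_mul_eq_eq_card h1 <| (eq_zero_or_eq_of_sum_sq_eq_mul_sum
      (fun x _ => card_filter_mul_eq_le_card_left A A x) hsq _ (mul_mem_mul ha hb)).resolve_left hpos
  exact ⟨{ carrier := A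
           mul_mem' := fun ha hb => hmul _ ha _ hb
           one_mem' := h1
           inv_mem' := fun ha => hsymm _ ha }, rfl⟩

/-- Equality in the energy bound: if a nonempty finite symmetric set `A`
containing the identity has multiplicative energy exactly `|A|³`, then `A`
is a subgroup. -/
theorem stmt_1 {G : Type*} [Group G] [DecidableEq G] (A : Finset G)
    (hA : A.Nonempty) (h1 : (1 : G) ∈ A) (hsymm : ∀ a ∈ A, a⁻¹ ∈ A)
    (henergy : ∑ᶠ x : G,
      (((A ×ˢ A).filter fun p => p.1 * p.2 = x).card) ^ 2 = A.card ^ 3) :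
    ∃ H : Subgroup G, (A : Set G) = (H : Set G) :=
  stmt_1_general A h1 hsymm henergy
end

section
/- Let G be a group and u₁, …, u_d ∈ G pairwise commuting elements, and N₁, …, N_d positive integers. Let P = {u₁^{n₁} ⋯ u_d^{n_d} : 0 ≤ nᵢ < Nᵢ} and A = P ∪ P⁻¹. Then A is a 4^d-approximate group: A is symmetric, contains the identity, and A·A ⊆ X·A for some set X with |X| ≤ 4^d. -/
/-!
For commuting `uᵢ`, the map `m ↦ u₁^m₁ ⋯ u_d^m_d` is a homomorphism from `ℤ^d`, so every element
of `A = P ∪ P⁻¹` is `u^m` with `|mᵢ| < Nᵢ` and a product of two is `u^s` with `|sᵢ| < 2Nᵢ`.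
Division with remainder `sᵢ = qᵢ Nᵢ + rᵢ` gives `qᵢ ∈ {-2, -1, 0, 1}` and `0 ≤ rᵢ < Nᵢ`, so
`u^s = u^(qN) · u^r ∈ X · P`, where `X` consists of the `4^d` elements `u^(qN)`.
-/

open Pointwise

section
variable {G : Type*} [Group G] {d : ℕ}

def zpowProd (u : Fin d → G) (m : Fin d → ℤ) : G :=
  (List.ofFn fun i => u i ^ m i).prod

lemma zpowProd_zero (u : Fin d → G) : zpowProd u 0 = 1 := by
  simp [zpowProd]

lemma zpowProd_succ (u : Fin (d + 1) → G) (m : Fin (d + 1) → ℤ) :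
    zpowProd u m = u 0 ^ m 0 * zpowProd (Fin.tail u) (Fin.tail m) := by
  simp only [zpowProd, List.ofFn_succ, List.prod_cons, Fin.tail]

lemma Commute.zpowProd_right {x : G} {u : Fin d → G} (h : ∀ i, Commute x (u i))
    (m : Fin d → ℤ) : Commute x (zpowProd u m) :=
  Commute.list_prod_right _ _ fun y hy => by
    obtain ⟨i, rfl⟩ := List.mem_ofFn.1 hy
    exact (h i).zpow_right _

lemma zpowProd_add {u : Fin d → G} (hcomm : ∀ i j, Commute (u i) (u j)) (m m' : Fin d → ℤ) :
    zpowProd u (m + m') = zpowProd u m * zpowProd u m' := by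
  induction d with
  | zero => simp [zpowProd]
  | succ d ih =>
    have hc : Commute (u 0 ^ m' 0) (zpowProd (Fin.tail u) (Fin.tail m)) :=
      ((Commute.zpowProd_right (fun i => hcomm 0 i.succ) _).zpow_left _)
    calc zpowProd u (m + m')
        = u 0 ^ m 0 * u 0 ^ m' 0 * (zpowProd (Fin.tail u) (Fin.tail m) *
            zpowProd (Fin.tail u) (Fin.tail m')) := by
          rw [zpowProd_succ, ← zpow_add, ← ih (u := Fin.tail u) fun i j => hcomm _ _]; rfl
      _ = u 0 ^ m 0 * zpowProd (Fin.tail u) (Fin.tail m) *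
            (u 0 ^ m' 0 * zpowProd (Fin.tail u) (Fin.tail m')) := by
          rw [mul_assoc, ← mul_assoc (u 0 ^ m' 0), hc.eq]; group
      _ = zpowProd u m * zpowProd u m' := by rw [zpowProd_succ u m, zpowProd_succ u m']

lemma zpowProd_neg {u : Fin d → G} (hcomm : ∀ i j, Commute (u i) (u j)) (m : Fin d → ℤ) :
    zpowProd u (-m) = (zpowProd u m)⁻¹ :=
  eq_inv_of_mul_eq_one_left <| by rw [← zpowProd_add hcomm, neg_add_cancel, zpowProd_zero]

def progression (u : Fin d → G) (N : Fin d → ℕ) : Set G :=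
  {x | ∃ n : Fin d → ℕ, (∀ i, n i < N i) ∧ x = (List.ofFn fun i => u i ^ n i).prod}

lemma mem_progression_iff {u : Fin d → G} {N : Fin d → ℕ} {g : G} :
    g ∈ progression u N ↔ ∃ m : Fin d → ℤ, (∀ i, 0 ≤ m i ∧ m i < N i) ∧ zpowProd u m = g := by
  constructor
  · rintro ⟨n, hn, rfl⟩
    exact ⟨fun i => n i, fun i => ⟨by positivity, by simpa using hn i⟩, by simp [zpowProd]⟩
  · rintro ⟨m, hm, rfl⟩
    refine ⟨fun i => (m i).toNat, fun i => by have := hm i; simp only; omega, ?_⟩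
    simp only [zpowProd]
    congr! 3 with i
    rw [← zpow_natCast, Int.toNat_of_nonneg (hm i).1]

lemma exists_zpowProd_eq_of_mem {u : Fin d → G} (hcomm : ∀ i j, Commute (u i) (u j))
    {N : Fin d → ℕ} {g : G} (hg : g ∈ progression u N ∪ (progression u N)⁻¹) :
    ∃ m : Fin d → ℤ, (∀ i, |m i| < N i) ∧ zpowProd u m = g := by
  rcases hg with hg | hg
  · obtain ⟨m, hm, rfl⟩ := mem_progression_iff.1 hg
    exact ⟨m, fun i => abs_lt.2 ⟨by linarith [hm i], (hm i).2⟩, rfl⟩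
  · obtain ⟨m, hm, hmg⟩ := mem_progression_iff.1 hg
    refine ⟨-m, fun i => ?_, by rw [zpowProd_neg hcomm, hmg, inv_inv]⟩
    rw [Pi.neg_apply, abs_neg]
    exact abs_lt.2 ⟨by linarith [hm i], (hm i).2⟩

lemma Int.ediv_mem_Ico_of_abs_lt {s n : ℤ} (hn : 0 < n) (hs : |s| < 2 * n) :
    s / n ∈ Finset.Ico (-2) 2 := by
  rw [abs_lt] at hs
  rw [Finset.mem_Ico, Int.le_ediv_iff_mul_le hn, Int.ediv_lt_iff_lt_mul hn]
  constructor <;> linarith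

noncomputable def progressionTranslates [DecidableEq G] (u : Fin d → G) (N : Fin d → ℕ) :
    Finset G :=
  (Fintype.piFinset fun _ => Finset.Ico (-2 : ℤ) 2).image fun q => zpowProd u fun i => q i * N i

lemma card_progressionTranslates_le [DecidableEq G] (u : Fin d → G) (N : Fin d → ℕ) :
    (progressionTranslates u N).card ≤ 4 ^ d :=
  calc (progressionTranslates u N).card
      ≤ (Fintype.piFinset fun _ : Fin d => Finset.Ico (-2 : ℤ) 2).card := Finset.card_image_le
    _ = 4 ^ d := by simp

lemma zpowProd_mul_mem_progressionTranslates_mul [DecidableEq G] {u : Fin d → G}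
    (hcomm : ∀ i j, Commute (u i) (u j)) {N : Fin d → ℕ} (hN : ∀ i, 0 < N i)
    {m m' : Fin d → ℤ} (hm : ∀ i, |m i| < N i) (hm' : ∀ i, |m' i| < N i) :
    zpowProd u m * zpowProd u m' ∈ (progressionTranslates u N : Set G) * progression u N := by
  set q : Fin d → ℤ := fun i => (m i + m' i) / N i
  set r : Fin d → ℤ := fun i => (m i + m' i) % N i
  have hN' : ∀ i, (0 : ℤ) < N i := fun i => by exact_mod_cast hN i
  have hqr : m + m' = (fun i => q i * N i) + r := by
    funext i
    simp only [Pi.add_apply, q, r, mul_comm _ (N i : ℤ), Int.mul_ediv_add_emod]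
  rw [← zpowProd_add hcomm, hqr, zpowProd_add hcomm]
  refine Set.mul_mem_mul (Finset.mem_image_of_mem _ (Fintype.mem_piFinset.2 fun i => ?_))
    (mem_progression_iff.2 ⟨r, fun i => ⟨Int.emod_nonneg _ (hN' i).ne',
      Int.emod_lt_of_pos _ (hN' i)⟩, rfl⟩)
  refine Int.ediv_mem_Ico_of_abs_lt (hN' i) ((abs_add_le _ _).trans_lt ?_)
  linarith [hm i, hm' i]

end

/-- A symmetrised multidimensional geometric progression on commuting
generators is a `4^d`-approximate group. -/
theorem stmt_6 {G : Type*} [Group G] (d : ℕ) (u : Fin d → G)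
    (hcomm : ∀ i j, Commute (u i) (u j)) (N : Fin d → ℕ)
    (hN : ∀ i, 0 < N i) :
    let P : Set G := {x | ∃ n : Fin d → ℕ, (∀ i, n i < N i) ∧
      x = (List.ofFn fun i => u i ^ n i).prod}
    let A : Set G := P ∪ P⁻¹
    A⁻¹ = A ∧ (1 : G) ∈ A ∧
      ∃ X : Set G, X.Finite ∧ X.ncard ≤ 4 ^ d ∧ A * A ⊆ X * A := by
  classical
  change let A := progression u N ∪ (progression u N)⁻¹
    A⁻¹ = A ∧ (1 : G) ∈ A ∧ ∃ X : Set G, X.Finite ∧ X.ncard ≤ 4 ^ d ∧ A * A ⊆ X * A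
  intro A
  refine ⟨by rw [Set.union_inv, inv_inv, Set.union_comm],
    Or.inl (mem_progression_iff.2 ⟨0, fun i => ⟨le_rfl, by simpa using hN i⟩, zpowProd_zero u⟩),
    progressionTranslates u N, Finset.finite_toSet _,
    (Set.ncard_coe_finset _).trans_le (card_progressionTranslates_le u N), ?_⟩
  rintro _ ⟨g, hg, h, hh, rfl⟩
  obtain ⟨m, hm, rfl⟩ := exists_zpowProd_eq_of_mem hcomm hg
  obtain ⟨m', hm', rfl⟩ := exists_zpowProd_eq_of_mem hcomm hh
  exact Set.mul_subset_mul_left Set.subset_union_left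
    (zpowProd_mul_mem_progressionTranslates_mul hcomm hN hm hm')
end

section
/- Let N ≥ 1 and let ε₁, …, ε_N ∈ {0,1} be arbitrary. Define A = {0} ∪ ⋃_{j=1}^{N} {2j − ε_j, −2j + ε_j} ⊆ ℤ. Then A is a symmetric set containing 0 and A + A ⊆ X + A where X = {−2N, 0, 2N} + {−1, 0, 1}, a set of size at most 9; in particular A is a 9-approximate group. -/
/-!
Every element of `A` has absolute value at most `2N`, so `A + A ⊆ [-4N, 4N]`, and the
interval `[-4N, 4N]` is covered by the three translates of `[-2N, 2N]` by `-2N, 0, 2N`.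
On the other hand each of `2j - 1, 2j` lies within distance one of the element `2j - ε j`
of `A` (and symmetrically for negative integers), so `[-2N, 2N] ⊆ {-1, 0, 1} + A`.
Hence `A + A ⊆ {-2N, 0, 2N} + {-1, 0, 1} + A`.
-/

open Pointwise Set

namespace Set

theorem ncard_triple_le {α : Type*} (a b c : α) : ({a, b, c} : Set α).ncard ≤ 3 :=
  calc ({a, b, c} : Set α).ncard ≤ ({b, c} : Set α).ncard + 1 := ncard_insert_le _ _
    _ ≤ ({c} : Set α).ncard + 1 + 1 := by grw [ncard_insert_le]
    _ = 3 := by rw [ncard_singleton]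

variable {α : Type*} [AddCommGroup α] [LinearOrder α] [IsOrderedAddMonoid α]

theorem Icc_add_self_subset_add_Icc (M : α) :
    Icc (-M + -M) (M + M) ⊆ {-M, 0, M} + Icc (-M) M := by
  rintro x ⟨hlo, hhi⟩
  rcases lt_or_ge x (-M) with hneg | hx
  · exact ⟨-M, by simp, x + M, ⟨by grind, by grind⟩, neg_add_cancel_comm_assoc M x⟩
  rcases le_or_gt x M with hx' | hpos
  · exact ⟨0, by simp, x, ⟨hx, hx'⟩, zero_add x⟩
  · exact ⟨M, by simp, x - M, ⟨by grind, by grind⟩, add_sub_cancel M x⟩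

theorem add_subset_add_of_subset_Icc {A T : Set α} {M : α} (hA : A ⊆ Icc (-M) M)
    (hT : Icc (-M) M ⊆ T + A) : A + A ⊆ ({-M, 0, M} + T) + A :=
  calc A + A ⊆ Icc (-M + -M) (M + M) := (add_subset_add hA hA).trans (Icc_add_Icc_subset ..)
    _ ⊆ {-M, 0, M} + Icc (-M) M := Icc_add_self_subset_add_Icc M
    _ ⊆ {-M, 0, M} + (T + A) := add_subset_add_left hT
    _ = ({-M, 0, M} + T) + A := (add_assoc ..).symm

end Set

def randomSignSet (N : ℕ) (ε : ℕ → ℤ) : Set ℤ :=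
  {0} ∪ ⋃ j ∈ Set.Icc 1 N, ({2 * (j : ℤ) - ε j, -(2 * (j : ℤ)) + ε j} : Set ℤ)

section randomSignSet

variable {N : ℕ} {ε : ℕ → ℤ}

theorem mem_randomSignSet {x : ℤ} : x ∈ randomSignSet N ε ↔
    x = 0 ∨ ∃ j : ℕ, 1 ≤ j ∧ j ≤ N ∧ (x = 2 * (j : ℤ) - ε j ∨ x = -(2 * (j : ℤ)) + ε j) := by
  simp [randomSignSet, and_assoc]

theorem zero_mem_randomSignSet : (0 : ℤ) ∈ randomSignSet N ε :=
  mem_randomSignSet.2 (Or.inl rfl)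

theorem neg_randomSignSet : -randomSignSet N ε = randomSignSet N ε := by
  ext x
  rw [mem_neg, mem_randomSignSet, mem_randomSignSet]
  constructor <;> rintro (h | ⟨j, h1, h2, h⟩)
  all_goals first
    | exact Or.inl (by omega)
    | exact Or.inr ⟨j, h1, h2, by omega⟩

variable (hε : ∀ j, ε j = 0 ∨ ε j = 1)
include hε

theorem randomSignSet_subset_Icc :
    randomSignSet N ε ⊆ Icc (-(2 * (N : ℤ))) (2 * N) := by
  intro x hx
  rcases mem_randomSignSet.1 hx with rfl | ⟨j, h1, h2, h⟩
  · constructor <;> omega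
  · constructor <;> rcases hε j with h' | h' <;> omega

theorem exists_mem_randomSignSet_sub_mem {m : ℤ} (h0 : 0 ≤ m) (hm : m ≤ 2 * N) :
    ∃ a ∈ randomSignSet N ε, m - a ∈ ({-1, 0, 1} : Set ℤ) := by
  rcases h0.eq_or_lt with rfl | hpos
  · exact ⟨0, zero_mem_randomSignSet, by simp⟩
  -- `m ∈ {2j - 1, 2j}` for this `j`
  set j : ℕ := (m.toNat + 1) / 2
  refine ⟨2 * (j : ℤ) - ε j, mem_randomSignSet.2 (Or.inr ⟨j, by omega, by omega, Or.inl rfl⟩), ?_⟩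
  simp only [mem_insert_iff, mem_singleton_iff]
  rcases hε j with h' | h' <;> omega

theorem Icc_subset_add_randomSignSet :
    Icc (-(2 * (N : ℤ))) (2 * N) ⊆ ({-1, 0, 1} : Set ℤ) + randomSignSet N ε := by
  rintro m ⟨hlo, hhi⟩
  rcases le_total 0 m with h0 | h0
  · obtain ⟨a, ha, hma⟩ := exists_mem_randomSignSet_sub_mem hε h0 hhi
    exact ⟨m - a, hma, a, ha, sub_add_cancel m a⟩
  · obtain ⟨a, ha, hma⟩ := exists_mem_randomSignSet_sub_mem (N := N) hε (neg_nonneg.2 h0) (by omega)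
    refine ⟨m + a, ?_, -a, by rwa [← mem_neg, neg_randomSignSet], add_neg_cancel_right m a⟩
    simp only [mem_insert_iff, mem_singleton_iff] at hma ⊢
    omega

end randomSignSet

theorem stmt_11_general (N : ℕ) (ε : ℕ → ℤ)
    (hε : ∀ j, ε j = 0 ∨ ε j = 1) :
    let A : Set ℤ := {0} ∪ ⋃ j ∈ Set.Icc 1 N,
      ({2 * (j : ℤ) - ε j, -(2 * (j : ℤ)) + ε j} : Set ℤ)
    let X : Set ℤ := ({-(2 * (N : ℤ)), 0, 2 * (N : ℤ)} : Set ℤ) +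
      ({-1, 0, 1} : Set ℤ)
    (-A = A) ∧ (0 : ℤ) ∈ A ∧ X.ncard ≤ 9 ∧ A + A ⊆ X + A := by
  intro A X
  change -randomSignSet N ε = randomSignSet N ε ∧ 0 ∈ randomSignSet N ε ∧ X.ncard ≤ 9 ∧
    randomSignSet N ε + randomSignSet N ε ⊆ X + randomSignSet N ε
  refine ⟨neg_randomSignSet, zero_mem_randomSignSet, ?_, ?_⟩
  · calc X.ncard ≤ 3 * 3 := (natCard_add_le).trans (Nat.mul_le_mul (ncard_triple_le ..)
          (ncard_triple_le ..))
      _ = 9 := rfl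
  · exact add_subset_add_of_subset_Icc (randomSignSet_subset_Icc hε)
      (Icc_subset_add_randomSignSet hε)

/-- The random-signs example: `A = {0} ∪ ⋃_{j=1}^N {2j-ε_j, -2j+ε_j}` is a
symmetric set containing `0`, and `A + A ⊆ X + A` where
`X = {-2N,0,2N} + {-1,0,1}` has at most 9 elements. -/
theorem stmt_11 (N : ℕ) (hN : 1 ≤ N) (ε : ℕ → ℤ)
    (hε : ∀ j, ε j = 0 ∨ ε j = 1) :
    let A : Set ℤ := {0} ∪ ⋃ j ∈ Set.Icc 1 N,
      ({2 * (j : ℤ) - ε j, -(2 * (j : ℤ)) + ε j} : Set ℤ)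
    let X : Set ℤ := ({-(2 * (N : ℤ)), 0, 2 * (N : ℤ)} : Set ℤ) +
      ({-1, 0, 1} : Set ℤ)
    (-A = A) ∧ (0 : ℤ) ∈ A ∧ X.ncard ≤ 9 ∧ A + A ⊆ X + A :=
  stmt_11_general N ε hε
end

section
/- Let V be a finite-dimensional vector space over 𝔽₂ and let φ : V → 𝔽₂ be a function such that the cube condition ∑_{ω ∈ {0,1}³} φ(x + ω₁h₁ + ω₂h₂ + ω₃h₃) = 0 holds for all x, h₁, h₂, h₃ ∈ V (sum in 𝔽₂). Then φ is a polynomial of degree at most 2, i.e., φ(x) = Q(x) + L(x) + c where Q is a quadratic form, L is linear, and c is constant. -/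
/-!
Over `𝔽₂` a quadratic form in Mathlib's sense only needs `Q (a • x) = a² Q x` and a bilinear
polar form; since `a² = a` for `a ∈ 𝔽₂`, this class already contains the linear forms, so one can
take `L = 0`, `c = φ 0` and `Q = φ - φ 0`. The cube condition at `x = 0` says exactly that the
polar form of `φ - φ 0` is additive in its first argument, and additivity gives `𝔽₂`-linearity.
-/

open QuadraticMap

section

variable {V N : Type*} [AddCommGroup V] [AddCommGroup N]

theorem polar_zero_left_of_add_left {f : V → N}
    (hadd : ∀ x x' y, polar f (x + x') y = polar f x y + polar f x' y) (y : V) :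
    polar f 0 y = 0 := by
  simpa using hadd 0 0 y

theorem polar_sub_apply_zero_add_left_of_cube (φ : V → ZMod 2)
    (hcube : ∀ x y z : V,
      φ 0 + φ x + φ y + φ z + φ (x + y) + φ (x + z) + φ (y + z) + φ (x + y + z) = 0)
    (x y z : V) :
    polar (fun v => φ v - φ 0) (x + y) z =
      polar (fun v => φ v - φ 0) x z + polar (fun v => φ v - φ 0) y z := by
  simp only [polar]
  linear_combination (norm := ring_nf) hcube x y z
  reduce_mod_char

theorem ZMod.eq_zero_or_eq_one_of_two (a : ZMod 2) : a = 0 ∨ a = 1 := by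
  revert a; decide

variable [Module (ZMod 2) V] [Module (ZMod 2) N]

theorem ZMod.two_smul_sub_apply_zero (f : V → N) (a : ZMod 2) (x : V) :
    f (a • x) - f 0 = (a * a) • (f x - f 0) := by
  rcases ZMod.eq_zero_or_eq_one_of_two a with rfl | rfl <;> simp

theorem polar_smul_left_of_add_left {f : V → N}
    (hadd : ∀ x x' y, polar f (x + x') y = polar f x y + polar f x' y)
    (a : ZMod 2) (x y : V) : polar f (a • x) y = a • polar f x y := by
  rcases ZMod.eq_zero_or_eq_one_of_two a with rfl | rfl
  · simp [polar_zero_left_of_add_left hadd]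
  · simp

end

theorem stmt_14_general {V : Type*} [AddCommGroup V] [Module (ZMod 2) V]
    (φ : V → ZMod 2)
    (hcube : ∀ x h₁ h₂ h₃ : V,
      φ x + φ (x + h₁) + φ (x + h₂) + φ (x + h₃) +
        φ (x + h₁ + h₂) + φ (x + h₁ + h₃) + φ (x + h₂ + h₃) +
        φ (x + h₁ + h₂ + h₃) = 0) :
    ∃ (Q : QuadraticForm (ZMod 2) V) (L : V →ₗ[ZMod 2] ZMod 2) (c : ZMod 2),
      ∀ x, φ x = Q x + L x + c := by
  have hadd := polar_sub_apply_zero_add_left_of_cube φ (by simpa using hcube 0)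
  refine ⟨ofPolar (fun v => φ v - φ 0) (ZMod.two_smul_sub_apply_zero φ) hadd
    (polar_smul_left_of_add_left hadd), 0, φ 0, fun x => ?_⟩
  simp [ofPolar]

/-- A function `V → 𝔽₂` whose third derivatives all vanish is a polynomial
of degree at most two: a quadratic form plus a linear form plus a constant. -/
theorem stmt_14 {V : Type*} [AddCommGroup V] [Module (ZMod 2) V]
    [Module.Finite (ZMod 2) V] (φ : V → ZMod 2)
    (hcube : ∀ x h₁ h₂ h₃ : V,
      φ x + φ (x + h₁) + φ (x + h₂) + φ (x + h₃) +
        φ (x + h₁ + h₂) + φ (x + h₁ + h₃) + φ (x + h₂ + h₃) +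
        φ (x + h₁ + h₂ + h₃) = 0) :
    ∃ (Q : QuadraticForm (ZMod 2) V) (L : V →ₗ[ZMod 2] ZMod 2) (c : ZMod 2),
      ∀ x, φ x = Q x + L x + c :=
  stmt_14_general φ hcube
end
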